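/- arXiv:2412.11195 — 6 statements merged into one kernel-verified Lean document; each statement's English description precedes it below -/
import Mathlib

section
/- Let G be a simple graph on n vertices. If there exists a vertex v of G such that the sum of the degrees deg(u) over all neighbors u of v is strictly greater than 2n, then G contains a cycle of length 4. -/
/-- A simple graph `G` contains a cycle of length `m`: there exist `m` pairwise
distinct vertices `v₀, …, v_{m-1}` such that `vᵢ` is adjacent to `v_{i+1}`,
indices taken modulo `m`. -/
def SimpleGraph.HasCycleOfLength {V : Type*} (G : SimpleGraph V) (m : ℕ) : Prop :=
  ∃ f : ZMod m → V, Function.Injective f ∧ ∀ i : ZMod m, G.Adj (f i) (f (i + 1))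

/-! Counting paths `v - u - w` with `u ∈ N(v)` by their endpoint `w` gives
`∑_{u ∈ N(v)} deg u = ∑_w #(N(v) ∩ N(w))`. The term `w = v` is `deg v ≤ n`, so if the sum exceeds
`2n` then some `w ≠ v` has two common neighbours `a ≠ b` with `v`, and `v, a, w, b` is a 4-cycle. -/

open Finset

namespace SimpleGraph

variable {V : Type*} (G : SimpleGraph V)

theorem hasCycleOfLength_four_of_adj {v a w b : V} (hva : G.Adj v a) (haw : G.Adj a w)
    (hwb : G.Adj w b) (hbv : G.Adj b v) (hvw : v ≠ w) (hab : a ≠ b) : G.HasCycleOfLength 4 := by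
  refine ⟨![v, a, w, b], ?_, ?_⟩
  · intro i j hij
    fin_cases i <;> fin_cases j <;> first
      | rfl
      | simp_all [G.ne_of_adj hva, G.ne_of_adj haw, G.ne_of_adj hwb, G.ne_of_adj hbv]
  · intro i
    fin_cases i
    exacts [hva, haw, hwb, hbv]

variable [Fintype V] [DecidableRel G.Adj]

theorem sum_degree_neighborFinset_eq_sum_card_filter_adj (v : V) :
    ∑ u ∈ G.neighborFinset v, G.degree u = ∑ w, #{u ∈ G.neighborFinset v | G.Adj u w} := by
  simp only [← card_neighborFinset_eq_degree, neighborFinset_eq_filter]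
  exact sum_card_bipartiteAbove_eq_sum_card_bipartiteBelow G.Adj

theorem exists_ne_one_lt_card_filter_adj {v : V}
    (h : 2 * Fintype.card V < ∑ u ∈ G.neighborFinset v, G.degree u) :
    ∃ w, w ≠ v ∧ 1 < #{u ∈ G.neighborFinset v | G.Adj u w} := by
  classical
  by_contra! hle
  have hv : #{u ∈ G.neighborFinset v | G.Adj u v} ≤ Fintype.card V := card_le_univ _
  have hrest : ∑ w ∈ univ.erase v, #{u ∈ G.neighborFinset v | G.Adj u w} ≤ Fintype.card V :=
    calc _ ≤ ∑ _w ∈ univ.erase v, 1 := sum_le_sum fun w hw => hle w (ne_of_mem_erase hw)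
      _ ≤ Fintype.card V := by simp
  rw [sum_degree_neighborFinset_eq_sum_card_filter_adj, ← add_sum_erase _ _ (mem_univ v)] at h
  omega

end SimpleGraph

/-- If some vertex `v` satisfies `∑_{u ∈ N(v)} deg(u) > 2n`, then `G` contains
a 4-cycle. -/
theorem four_cycle_of_dense_neighborhood {V : Type*} [Fintype V]
    (G : SimpleGraph V) [DecidableRel G.Adj] (v : V)
    (h : 2 * Fintype.card V < ∑ u ∈ G.neighborFinset v, G.degree u) :
    G.HasCycleOfLength 4 := by
  obtain ⟨w, hwv, hw⟩ := G.exists_ne_one_lt_card_filter_adj h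
  obtain ⟨a, ha, b, hb, hab⟩ := one_lt_card.1 hw
  simp only [mem_filter, SimpleGraph.mem_neighborFinset] at ha hb
  exact G.hasCycleOfLength_four_of_adj ha.1 ha.2 hb.2.symm hb.1.symm hwv.symm hab
end

section
/- Every finite simple graph with m edges contains a bipartite subgraph with at least m/2 edges; that is, there exists a partition of the vertex set of G into two sets A and B such that the number of edges of G having one endpoint in A and the other endpoint in B is at least m/2. -/
open scoped Classical

/-- Every finite simple graph with `m` edges contains a bipartite subgraph with at
least `m / 2` edges: there is a partition `(A, B)` of the vertex set such that the
number of edges with one endpoint in `A` and the other in `B` is at least `m / 2`. -/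
theorem exists_bipartite_subgraph_half_edges {V : Type*} [Fintype V] [DecidableEq V]
    (G : SimpleGraph V) [DecidableRel G.Adj] :
    ∃ A B : Finset V, A ∪ B = Finset.univ ∧ A ∩ B = ∅ ∧
      (G.edgeFinset.card : ℝ) / 2 ≤
        ((G.edgeFinset.filter fun e => ∃ a ∈ A, ∃ b ∈ B, e = s(a, b)).card : ℝ) := by
  classical
  set m := G.edgeFinset.card with hm
  let P : Sym2 V → Finset V → Prop := fun e A => ∃ a ∈ A, ∃ b ∈ Finset.univ \ A, e = s(a, b)
  let cut : Finset V → ℕ := fun A => (G.edgeFinset.filter fun e => P e A).card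
  have hP_iff : ∀ u v (A : Finset V),
      P s(u, v) A ↔ ((u ∈ A ∧ v ∉ A) ∨ (v ∈ A ∧ u ∉ A)) := by
    intro u v A
    constructor
    · rintro ⟨a, ha, b, hb, hab⟩
      simp only [Finset.mem_sdiff, Finset.mem_univ, true_and] at hb
      rw [Sym2.eq_iff] at hab
      rcases hab with ⟨rfl, rfl⟩ | ⟨rfl, rfl⟩
      · exact Or.inl ⟨ha, hb⟩
      · exact Or.inr ⟨ha, hb⟩
    · rintro (⟨h1, h2⟩ | ⟨h1, h2⟩)
      · exact ⟨u, h1, v, by simp [h2], rfl⟩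
      · exact ⟨v, h1, u, by simp [h2], Sym2.eq_swap⟩
  have hcount : ∀ e ∈ G.edgeFinset,
      2 * (Finset.univ.filter fun A => P e A).card = 2 ^ Fintype.card V := by
    intro e he
    induction e using Sym2.ind with
    | _ u v =>
      have hadj : G.Adj u v := by
        rw [SimpleGraph.mem_edgeFinset, SimpleGraph.mem_edgeSet] at he
        exact he
      have huv : u ≠ v := G.ne_of_adj hadj
      set f : Finset V → Finset V := fun A => if u ∈ A then A.erase u else insert u A with hf
      have hfmemu : ∀ A, u ∈ f A ↔ u ∉ A := by
        intro A; by_cases h : u ∈ A <;> simp [f, h]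
      have hfmemv : ∀ A, v ∈ f A ↔ v ∈ A := by
        intro A; by_cases h : u ∈ A <;> simp [f, h, huv.symm, Ne.symm huv]
      have hff : ∀ A, f (f A) = A := by
        intro A
        by_cases h : u ∈ A
        · simp [f, h, Finset.insert_erase h]
        · simp [f, h, Finset.erase_insert h]
      have hflip : ∀ A, P s(u, v) (f A) ↔ ¬ P s(u, v) A := by
        intro A
        rw [hP_iff, hP_iff, hfmemu, hfmemv]
        by_cases h1 : u ∈ A <;> by_cases h2 : v ∈ A <;> tauto
      have hcard : (Finset.univ.filter fun A => P s(u, v) A).card =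
          (Finset.univ.filter fun A => ¬ P s(u, v) A).card := by
        apply Finset.card_bij' (fun A _ => f A) (fun A _ => f A)
        · intro A hA
          simp only [Finset.mem_filter, Finset.mem_univ, true_and] at hA ⊢
          intro hPfA
          exact ((hflip A).mp hPfA) hA
        · intro A hA
          simp only [Finset.mem_filter, Finset.mem_univ, true_and] at hA ⊢
          exact (hflip A).mpr hA
        · intro A _; exact hff A
        · intro A _; exact hff A
      have htot : (Finset.univ.filter fun A => P s(u, v) A).card +
          (Finset.univ.filter fun A => ¬ P s(u, v) A).card = 2 ^ Fintype.card V := by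
        rw [Finset.card_filter_add_card_filter_not]
        simp [Fintype.card_finset]
      omega
  have hcut : ∀ A : Finset V, cut A = ∑ e ∈ G.edgeFinset, if P e A then 1 else 0 := by
    intro A; exact Finset.card_filter _ _
  have h2sum : 2 * ∑ A : Finset V, cut A = m * 2 ^ Fintype.card V := by
    have : ∑ A : Finset V, cut A = ∑ e ∈ G.edgeFinset,
        (Finset.univ.filter fun A => P e A).card := by
      simp only [hcut]
      rw [Finset.sum_comm]
      congr 1
      ext e
      rw [Finset.card_filter]
    rw [this, Finset.mul_sum, Finset.sum_congr rfl hcount, Finset.sum_const, hm]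
    ring
  have hex : ∃ A : Finset V, m ≤ 2 * cut A := by
    by_contra h
    push_neg at h
    have hlt : ∑ A : Finset V, 2 * cut A < ∑ _A : Finset V, m :=
      Finset.sum_lt_sum_of_nonempty Finset.univ_nonempty (fun A _ => h A)
    rw [← Finset.mul_sum, h2sum, Finset.sum_const, smul_eq_mul, Finset.card_univ,
      Fintype.card_finset, mul_comm] at hlt
    exact lt_irrefl _ hlt
  obtain ⟨A, hA⟩ := hex
  refine ⟨A, Finset.univ \ A, ?_, ?_, ?_⟩
  · exact Finset.union_sdiff_of_subset (Finset.subset_univ A)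
  · exact Finset.inter_sdiff_self A Finset.univ
  · rw [div_le_iff₀ (by norm_num : (0:ℝ) < 2)]
    have : (m : ℝ) ≤ 2 * cut A := by exact_mod_cast hA
    calc (m : ℝ) ≤ 2 * cut A := this
      _ = (cut A : ℝ) * 2 := by ring
end

section
/- Let n ≥ 1 be an integer, let p, q ∈ {1,...,n} with p + q ≤ n, and let 𝒜 be a family of subsets of {1,...,n} such that every A ∈ 𝒜 satisfies |A| ≤ p. Then there exists a subfamily ℬ ⊆ 𝒜 that is q-representative of 𝒜 and satisfies |ℬ| ≤ C(p+q, p), the binomial coefficient (p+q choose p). -/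
open Finset Function

/-- Given a family `𝒜` of subsets of the ground set `{1, …, n}` (modeled as `Fin n`)
and `q`, a subfamily `ℬ ⊆ 𝒜` is `q`-representative of `𝒜` if for every `X` of size
at most `q`, some member of `𝒜` is disjoint from `X` iff some member of `ℬ` is. -/
def IsQRepresentative {n : ℕ} (q : ℕ) (𝒜 ℬ : Finset (Finset (Fin n))) : Prop :=
  ℬ ⊆ 𝒜 ∧ ∀ X : Finset (Fin n), X.card ≤ q →
    ((∃ A ∈ 𝒜, A ∩ X = ∅) ↔ (∃ B ∈ ℬ, B ∩ X = ∅))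

namespace MonienAux

variable {n : ℕ}

/-- congruence for `orderIsoOfFin` under equality of finsets -/
lemma orderIsoOfFin_congr {s t : Finset (Fin n)} (hst : s = t) {k : ℕ}
    (hs : s.card = k) (ht : t.card = k) (i : Fin k) :
    ((s.orderIsoOfFin hs i : Fin n)) = ((t.orderIsoOfFin ht i : Fin n)) := by
  subst hst; rfl

/-- The "sorted" version of `g` with respect to the pair `(A, X)`:
elements of `A` get mapped to the smallest `A.card` values of `g` on `A ∪ X`
(in an order-preserving way w.r.t. `g`), elements of `X` to the rest. -/
noncomputable def sortAux (A X : Finset (Fin n)) (g : Fin n → Fin n)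
    (hQ : (A.image g).card = A.card) (hR : (X.image g).card = X.card)
    (hP : ((A ∪ X).image g).card = A.card + X.card) (y : Fin n) : Fin n :=
  if hy : y ∈ A then
    (((A ∪ X).image g).orderIsoOfFin hP
      (Fin.castAdd X.card (((A.image g).orderIsoOfFin hQ).symm
        ⟨g y, mem_image_of_mem g hy⟩)) : Fin n)
  else if hy' : y ∈ X then
    (((A ∪ X).image g).orderIsoOfFin hP
      (Fin.natAdd A.card (((X.image g).orderIsoOfFin hR).symm
        ⟨g y, mem_image_of_mem g hy'⟩)) : Fin n)
  else g y

section SortAux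

variable {A X : Finset (Fin n)} {g : Fin n → Fin n}
  {hQ : (A.image g).card = A.card} {hR : (X.image g).card = X.card}
  {hP : ((A ∪ X).image g).card = A.card + X.card}

lemma sortAux_lt (hd : Disjoint A X) {u v : Fin n} (hu : u ∈ A) (hv : v ∈ X) :
    sortAux A X g hQ hR hP u < sortAux A X g hQ hR hP v := by
  have hvA : v ∉ A := fun h => (disjoint_left.mp hd h hv)
  simp only [sortAux, dif_pos hu, dif_neg hvA, dif_pos hv]
  rw [Subtype.coe_lt_coe]
  rw [OrderIso.lt_iff_lt]
  rw [Fin.lt_def]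
  simp only [Fin.coe_castAdd, Fin.coe_natAdd]
  omega

lemma sortAux_mem {y : Fin n} (hy : y ∈ A ∪ X) :
    sortAux A X g hQ hR hP y ∈ (A ∪ X).image g := by
  simp only [sortAux]
  rcases mem_union.mp hy with h | h
  · rw [dif_pos h]; exact Subtype.property _
  · by_cases h' : y ∈ A
    · rw [dif_pos h']; exact Subtype.property _
    · rw [dif_neg h', dif_pos h]; exact Subtype.property _

lemma sortAux_eq_of_not_mem {y : Fin n} (hy : y ∉ A ∪ X) :
    sortAux A X g hQ hR hP y = g y := by
  rw [mem_union, not_or] at hy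
  simp only [sortAux, dif_neg hy.1, dif_neg hy.2]

lemma sortAux_injective (hg : Injective g) (hd : Disjoint A X) :
    Injective (sortAux A X g hQ hR hP) := by
  have hnot : ∀ y : Fin n, y ∉ A ∪ X → g y ∉ (A ∪ X).image g := by
    intro y hy hmem
    obtain ⟨e, he, hge⟩ := mem_image.mp hmem
    exact hy (hg hge ▸ he)
  intro y₁ y₂ h
  by_cases h1 : y₁ ∈ A ∪ X
  · by_cases h2 : y₂ ∈ A ∪ X
    · -- both in E
      rcases mem_union.mp h1 with hA1 | hX1 <;> rcases mem_union.mp h2 with hA2 | hX2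
      · -- both in A
        simp only [sortAux, dif_pos hA1, dif_pos hA2] at h
        have h' := (((A ∪ X).image g).orderIsoOfFin hP).injective (Subtype.coe_injective h)
        have hv : ((((A.image g).orderIsoOfFin hQ).symm ⟨g y₁, mem_image_of_mem g hA1⟩) : Fin A.card)
            = (((A.image g).orderIsoOfFin hQ).symm ⟨g y₂, mem_image_of_mem g hA2⟩) := by
          have := congrArg Fin.val h'
          simp only [Fin.coe_castAdd] at this
          exact Fin.ext this
        have := (((A.image g).orderIsoOfFin hQ).symm).injective hv
        exact hg (Subtype.ext_iff.mp this)
      · -- y₁ ∈ A, y₂ ∈ X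
        have h2A : y₂ ∉ A := fun hh => disjoint_left.mp hd hh hX2
        simp only [sortAux, dif_pos hA1, dif_neg h2A, dif_pos hX2] at h
        have h' := (((A ∪ X).image g).orderIsoOfFin hP).injective (Subtype.coe_injective h)
        have := congrArg Fin.val h'
        simp only [Fin.coe_castAdd, Fin.coe_natAdd] at this
        have hlt := ((((A.image g).orderIsoOfFin hQ).symm ⟨g y₁, mem_image_of_mem g hA1⟩)).isLt
        omega
      · -- y₁ ∈ X, y₂ ∈ A
        have h1A : y₁ ∉ A := fun hh => disjoint_left.mp hd hh hX1
        simp only [sortAux, dif_neg h1A, dif_pos hX1, dif_pos hA2] at h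
        have h' := (((A ∪ X).image g).orderIsoOfFin hP).injective (Subtype.coe_injective h)
        have := congrArg Fin.val h'
        simp only [Fin.coe_castAdd, Fin.coe_natAdd] at this
        have hlt := ((((A.image g).orderIsoOfFin hQ).symm ⟨g y₂, mem_image_of_mem g hA2⟩)).isLt
        omega
      · -- both in X
        have h1A : y₁ ∉ A := fun hh => disjoint_left.mp hd hh hX1
        have h2A : y₂ ∉ A := fun hh => disjoint_left.mp hd hh hX2
        simp only [sortAux, dif_neg h1A, dif_pos hX1, dif_neg h2A, dif_pos hX2] at h
        have h' := (((A ∪ X).image g).orderIsoOfFin hP).injective (Subtype.coe_injective h)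
        have hv : ((((X.image g).orderIsoOfFin hR).symm ⟨g y₁, mem_image_of_mem g hX1⟩) : Fin X.card)
            = (((X.image g).orderIsoOfFin hR).symm ⟨g y₂, mem_image_of_mem g hX2⟩) := by
          have := congrArg Fin.val h'
          simp only [Fin.coe_natAdd] at this
          exact Fin.ext (by omega)
        have := (((X.image g).orderIsoOfFin hR).symm).injective hv
        exact hg (Subtype.ext_iff.mp this)
    · exact absurd (h ▸ sortAux_mem (g := g) (hQ := hQ) (hR := hR) (hP := hP) h1)
        (by rw [sortAux_eq_of_not_mem h2]; exact hnot y₂ h2)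
  · by_cases h2 : y₂ ∈ A ∪ X
    · exact absurd (h ▸ sortAux_mem (g := g) (hQ := hQ) (hR := hR) (hP := hP) h2)
        (by rw [sortAux_eq_of_not_mem h1]; exact hnot y₁ h1)
    · rw [sortAux_eq_of_not_mem h1, sortAux_eq_of_not_mem h2] at h
      exact hg h

lemma sortAux_image (hg : Injective g) (hd : Disjoint A X) :
    (A ∪ X).image (sortAux A X g hQ hR hP) = (A ∪ X).image g := by
  apply eq_of_subset_of_card_le
  · intro x hx
    obtain ⟨y, hy, rfl⟩ := mem_image.mp hx
    exact sortAux_mem hy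
  · rw [card_image_of_injective _ (sortAux_injective hg hd), card_image_of_injective _ hg]

end SortAux

noncomputable def sortFun (A X : Finset (Fin n)) (g : Fin n → Fin n) : Fin n → Fin n :=
  if h : (A.image g).card = A.card ∧ (X.image g).card = X.card ∧
      ((A ∪ X).image g).card = A.card + X.card then
    sortAux A X g h.1 h.2.1 h.2.2
  else g

section SortFun

variable {A X : Finset (Fin n)} {g : Fin n → Fin n}

lemma sortFun_eq (hg : Injective g) (hd : Disjoint A X) :
    sortFun A X g = sortAux A X g (card_image_of_injective A hg) (card_image_of_injective X hg)
      (by rw [card_image_of_injective _ hg, card_union_of_disjoint hd]) := by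
  rw [sortFun, dif_pos ⟨card_image_of_injective A hg, card_image_of_injective X hg,
    by rw [card_image_of_injective _ hg, card_union_of_disjoint hd]⟩]

lemma sortFun_injective (hg : Injective g) (hd : Disjoint A X) :
    Injective (sortFun A X g) := by
  rw [sortFun_eq hg hd]; exact sortAux_injective hg hd

lemma sortFun_lt (hg : Injective g) (hd : Disjoint A X) {u v : Fin n}
    (hu : u ∈ A) (hv : v ∈ X) : sortFun A X g u < sortFun A X g v := by
  rw [sortFun_eq hg hd]; exact sortAux_lt hd hu hv

lemma sortFun_image (hg : Injective g) (hd : Disjoint A X) :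
    (A ∪ X).image (sortFun A X g) = (A ∪ X).image g := by
  rw [sortFun_eq hg hd]; exact sortAux_image hg hd

end SortFun

/-- Key reconstruction: an injective function in a fiber of `sortFun` is determined
by the image of `A`. -/
lemma sortFun_fiber_inj {A X : Finset (Fin n)} (hd : Disjoint A X) {g₁ g₂ : Fin n → Fin n}
    (h₁ : Injective g₁) (h₂ : Injective g₂)
    (hsort : sortFun A X g₁ = sortFun A X g₂) (hQeq : A.image g₁ = A.image g₂) :
    g₁ = g₂ := by
  classical
  rw [sortFun_eq h₁ hd, sortFun_eq h₂ hd] at hsort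
  have hPeq : (A ∪ X).image g₁ = (A ∪ X).image g₂ := by
    rw [← sortAux_image h₁ hd (hQ := card_image_of_injective A h₁)
        (hR := card_image_of_injective X h₁)
        (hP := by rw [card_image_of_injective _ h₁, card_union_of_disjoint hd]),
      ← sortAux_image h₂ hd (hQ := card_image_of_injective A h₂)
        (hR := card_image_of_injective X h₂)
        (hP := by rw [card_image_of_injective _ h₂, card_union_of_disjoint hd]),
      hsort]
  have hRdisj : ∀ (g : Fin n → Fin n), Injective g →
      (A ∪ X).image g \ A.image g = X.image g := by
    intro g hg
    rw [image_union, union_sdiff_cancel_left ((disjoint_image hg).mpr hd)]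
  have hReq : X.image g₁ = X.image g₂ := by
    rw [← hRdisj g₁ h₁, ← hRdisj g₂ h₂, hPeq, hQeq]
  funext y
  by_cases hyA : y ∈ A
  · have e := congrFun hsort y
    simp only [sortAux, dif_pos hyA] at e
    rw [orderIsoOfFin_congr hPeq _
      (by rw [card_image_of_injective _ h₂, card_union_of_disjoint hd])] at e
    have hi := (((A ∪ X).image g₂).orderIsoOfFin _).injective (Subtype.coe_injective e)
    have hval := congrArg Fin.val hi
    simp only [Fin.coe_castAdd] at hval
    have hj : ((((A.image g₁).orderIsoOfFin (card_image_of_injective A h₁)).symm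
          ⟨g₁ y, mem_image_of_mem g₁ hyA⟩) : Fin A.card)
        = (((A.image g₂).orderIsoOfFin (card_image_of_injective A h₂)).symm
          ⟨g₂ y, mem_image_of_mem g₂ hyA⟩) := Fin.ext hval
    have r1 : g₁ y = (((A.image g₁).orderIsoOfFin (card_image_of_injective A h₁))
        ((((A.image g₁).orderIsoOfFin (card_image_of_injective A h₁)).symm
          ⟨g₁ y, mem_image_of_mem g₁ hyA⟩)) : Fin n) := by
      rw [OrderIso.apply_symm_apply]
    have r2 : g₂ y = (((A.image g₂).orderIsoOfFin (card_image_of_injective A h₂))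
        ((((A.image g₂).orderIsoOfFin (card_image_of_injective A h₂)).symm
          ⟨g₂ y, mem_image_of_mem g₂ hyA⟩)) : Fin n) := by
      rw [OrderIso.apply_symm_apply]
    rw [r1, r2, ← hj]
    exact orderIsoOfFin_congr hQeq _ _ _
  · by_cases hyX : y ∈ X
    · have e := congrFun hsort y
      simp only [sortAux, dif_neg hyA, dif_pos hyX] at e
      rw [orderIsoOfFin_congr hPeq _
        (by rw [card_image_of_injective _ h₂, card_union_of_disjoint hd])] at e
      have hi := (((A ∪ X).image g₂).orderIsoOfFin _).injective (Subtype.coe_injective e)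
      have hval := congrArg Fin.val hi
      simp only [Fin.coe_natAdd] at hval
      have hj : ((((X.image g₁).orderIsoOfFin (card_image_of_injective X h₁)).symm
            ⟨g₁ y, mem_image_of_mem g₁ hyX⟩) : Fin X.card)
          = (((X.image g₂).orderIsoOfFin (card_image_of_injective X h₂)).symm
            ⟨g₂ y, mem_image_of_mem g₂ hyX⟩) := Fin.ext (by omega)
      have r1 : g₁ y = (((X.image g₁).orderIsoOfFin (card_image_of_injective X h₁))
          ((((X.image g₁).orderIsoOfFin (card_image_of_injective X h₁)).symm
            ⟨g₁ y, mem_image_of_mem g₁ hyX⟩)) : Fin n) := by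
        rw [OrderIso.apply_symm_apply]
      have r2 : g₂ y = (((X.image g₂).orderIsoOfFin (card_image_of_injective X h₂))
          ((((X.image g₂).orderIsoOfFin (card_image_of_injective X h₂)).symm
            ⟨g₂ y, mem_image_of_mem g₂ hyX⟩)) : Fin n) := by
        rw [OrderIso.apply_symm_apply]
      rw [r1, r2, ← hj]
      exact orderIsoOfFin_congr hReq _ _ _
    · have e := congrFun hsort y
      rwa [sortAux_eq_of_not_mem (by simp [hyA, hyX]),
        sortAux_eq_of_not_mem (by simp [hyA, hyX])] at e

/-- The number of injective functions `Fin n → Fin n` is `n!`. -/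
lemma card_inj_funs (s : Finset (Fin n → Fin n)) (hs : ∀ g, g ∈ s ↔ Injective g) :
    s.card = n.factorial := by
  have himg : s = univ.image (fun e : Fin n ↪ Fin n => ⇑e) := by
    ext g
    rw [hs, mem_image]
    constructor
    · intro hg; exact ⟨⟨g, hg⟩, mem_univ _, rfl⟩
    · rintro ⟨e, -, rfl⟩; exact e.injective
  rw [himg, card_image_of_injective _ Function.Embedding.coe_injective, card_univ,
    Fintype.card_embedding_eq, Fintype.card_fin, Nat.descFactorial_self]

/-- Counting lemma: at least `n! / C(a+b, a)` injective functions sort `A` before `X`. -/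
lemma count_le (A X : Finset (Fin n)) (hd : Disjoint A X)
    (T : Finset (Fin n → Fin n))
    (hT : ∀ g : Fin n → Fin n, Injective g → (∀ u ∈ A, ∀ v ∈ X, g u < g v) → g ∈ T) :
    n.factorial ≤ (A.card + X.card).choose A.card * T.card := by
  classical
  set s := univ.filter (fun g : Fin n → Fin n => Injective g) with hs_def
  have hs : ∀ g, g ∈ s ↔ Injective g := by intro g; simp [hs_def]
  have himg : s.image (sortFun A X) ⊆ T := by
    intro τ hτ
    obtain ⟨g, hg, rfl⟩ := mem_image.mp hτ
    exact hT _ (sortFun_injective ((hs g).mp hg) hd)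
      (fun u hu v hv => sortFun_lt ((hs g).mp hg) hd hu hv)
  have h1 : s.card ≤ (A.card + X.card).choose A.card * (s.image (sortFun A X)).card := by
    apply card_le_mul_card_image
    intro τ hτ
    obtain ⟨g₀, hg₀, hg₀τ⟩ := mem_image.mp hτ
    have hg₀i : Injective g₀ := (hs g₀).mp hg₀
    have hcard : ((A ∪ X).image τ).card = A.card + X.card := by
      rw [← hg₀τ, sortFun_image hg₀i hd, card_image_of_injective _ hg₀i,
        card_union_of_disjoint hd]
    have key : (s.filter (fun g => sortFun A X g = τ)).card
        ≤ (((A ∪ X).image τ).powersetCard A.card).card := by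
      apply card_le_card_of_injOn (fun g => A.image g)
      · intro g hg
        rw [mem_coe, mem_filter] at hg
        obtain ⟨hgs, hgτ⟩ := hg
        have hgi : Injective g := (hs g).mp hgs
        rw [mem_coe, mem_powersetCard]
        exact ⟨by rw [← hgτ, sortFun_image hgi hd]
                  exact image_subset_image subset_union_left,
          card_image_of_injective A hgi⟩
      · intro g₁ hh₁ g₂ hh₂ heq
        rw [mem_coe, mem_filter] at hh₁ hh₂
        exact sortFun_fiber_inj hd ((hs g₁).mp hh₁.1) ((hs g₂).mp hh₂.1)
          (hh₁.2.trans hh₂.2.symm) heq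
    rw [card_powersetCard, hcard] at key
    exact key
  calc n.factorial = s.card := (card_inj_funs s hs).symm
    _ ≤ (A.card + X.card).choose A.card * (s.image (sortFun A X)).card := h1
    _ ≤ (A.card + X.card).choose A.card * T.card :=
        Nat.mul_le_mul_left _ (card_le_card himg)

lemma choose_le_choose' {a b p q : ℕ} (hap : a ≤ p) (hbq : b ≤ q) :
    (a + b).choose a ≤ (p + q).choose p := by
  have h1 : (a + b).choose a = (a + b).choose b := by
    have := Nat.choose_symm (Nat.le_add_right a b) (n := a + b)
    simpa using this.symm
  have h2 : (p + b).choose b = (p + b).choose p := by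
    have h := Nat.choose_symm (Nat.le_add_left b p) (n := p + b)
    simp only [Nat.add_sub_cancel] at h
    exact h.symm
  calc (a + b).choose a = (a + b).choose b := h1
    _ ≤ (p + b).choose b := Nat.choose_le_choose b (by omega)
    _ = (p + b).choose p := h2
    _ ≤ (p + q).choose p := Nat.choose_le_choose p (by omega)

/-- Bollobás-type bound. -/
lemma bollobas (p q : ℕ) (ℬ : Finset (Finset (Fin n)))
    (X : Finset (Fin n) → Finset (Fin n))
    (hBp : ∀ B ∈ ℬ, B.card ≤ p) (hXq : ∀ B ∈ ℬ, (X B).card ≤ q)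
    (hdisj : ∀ B ∈ ℬ, Disjoint B (X B))
    (hcross : ∀ B ∈ ℬ, ∀ B' ∈ ℬ, B ≠ B' → ¬ Disjoint B' (X B)) :
    ℬ.card ≤ (p + q).choose p := by
  classical
  set S : Finset (Fin n) → Finset (Fin n → Fin n) :=
    fun B => univ.filter (fun g => Injective g ∧ ∀ u ∈ B, ∀ v ∈ X B, g u < g v) with hS
  have hmemS : ∀ B g, g ∈ S B ↔ (Injective g ∧ ∀ u ∈ B, ∀ v ∈ X B, g u < g v) := by
    intro B g; simp [hS]
  have hdisjS : ∀ B ∈ ℬ, ∀ B' ∈ ℬ, B ≠ B' → Disjoint (S B) (S B') := by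
    intro B hB B' hB' hne
    rw [disjoint_left]
    intro g hg hg'
    rw [hmemS] at hg hg'
    obtain ⟨u, hu1, hu2⟩ := not_disjoint_iff.mp (hcross B hB B' hB' hne)
    obtain ⟨v, hv1, hv2⟩ := not_disjoint_iff.mp (hcross B' hB' B hB hne.symm)
    exact absurd (hg.2 v hv1 u hu2) (not_lt.mpr (le_of_lt (hg'.2 u hu1 v hv2)))
  have hsum : ∑ B ∈ ℬ, (S B).card ≤ n.factorial := by
    rw [← card_biUnion hdisjS]
    have hsub : ℬ.biUnion S ⊆ univ.filter (fun g : Fin n → Fin n => Injective g) := by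
      intro g hg
      obtain ⟨B, hB, hgB⟩ := mem_biUnion.mp hg
      rw [mem_filter]
      exact ⟨mem_univ _, ((hmemS B g).mp hgB).1⟩
    calc (ℬ.biUnion S).card ≤ _ := card_le_card hsub
      _ = n.factorial := card_inj_funs _ (fun g => by simp)
  have hlower : ∀ B ∈ ℬ, n.factorial ≤ (p + q).choose p * (S B).card := by
    intro B hB
    calc n.factorial ≤ (B.card + (X B).card).choose B.card * (S B).card :=
          count_le B (X B) (hdisj B hB) (S B)
            (fun g hg hord => (hmemS B g).mpr ⟨hg, hord⟩)
      _ ≤ (p + q).choose p * (S B).card :=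
          Nat.mul_le_mul_right _ (choose_le_choose' (hBp B hB) (hXq B hB))
  have hmain : ℬ.card * n.factorial ≤ (p + q).choose p * n.factorial := by
    calc ℬ.card * n.factorial = ∑ _B ∈ ℬ, n.factorial := by
          rw [sum_const, smul_eq_mul]
      _ ≤ ∑ B ∈ ℬ, (p + q).choose p * (S B).card := sum_le_sum hlower
      _ = (p + q).choose p * ∑ B ∈ ℬ, (S B).card := by rw [mul_sum]
      _ ≤ (p + q).choose p * n.factorial := Nat.mul_le_mul_left _ hsum
  exact Nat.le_of_mul_le_mul_right hmain (Nat.factorial_pos n)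

end MonienAux

/-- Monien's representative lemma: if every member of `𝒜` has size at most `p` and
`p + q ≤ n`, then `𝒜` has a `q`-representative subfamily of size at most `C(p+q, p)`. -/
theorem exists_small_representative_family (n p q : ℕ) (hn : 1 ≤ n)
    (hp1 : 1 ≤ p) (hpn : p ≤ n) (hq1 : 1 ≤ q) (hqn : q ≤ n) (hpq : p + q ≤ n)
    (𝒜 : Finset (Finset (Fin n))) (hA : ∀ A ∈ 𝒜, A.card ≤ p) :
    ∃ ℬ : Finset (Finset (Fin n)),
      IsQRepresentative q 𝒜 ℬ ∧ ℬ.card ≤ Nat.choose (p + q) p := by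
  classical
  -- take a representative subfamily of minimum cardinality
  set Srep : Finset (Finset (Finset (Fin n))) :=
    𝒜.powerset.filter (fun C => IsQRepresentative q 𝒜 C) with hSrep
  have hself : 𝒜 ∈ Srep := by
    rw [hSrep, Finset.mem_filter, Finset.mem_powerset]
    exact ⟨Finset.Subset.refl _, Finset.Subset.refl _, fun X _ => Iff.rfl⟩
  obtain ⟨ℬ, hℬS, hmin⟩ := Finset.exists_min_image Srep Finset.card ⟨𝒜, hself⟩
  rw [hSrep, Finset.mem_filter, Finset.mem_powerset] at hℬS
  obtain ⟨hℬA, hℬrep⟩ := hℬS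
  refine ⟨ℬ, hℬrep, ?_⟩
  -- witnesses from minimality
  have hwit : ∀ B ∈ ℬ, ∃ Y : Finset (Fin n), Y.card ≤ q ∧ B ∩ Y = ∅ ∧
      ∀ B' ∈ ℬ, B' ≠ B → B' ∩ Y ≠ ∅ := by
    intro B hB
    have herase : ¬ IsQRepresentative q 𝒜 (ℬ.erase B) := by
      intro hrep
      have : ℬ.erase B ∈ Srep := by
        rw [hSrep, Finset.mem_filter, Finset.mem_powerset]
        exact ⟨(Finset.erase_subset _ _).trans hℬA, hrep⟩
      have hle := hmin _ this
      have := Finset.card_erase_lt_of_mem hB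
      omega
    rw [IsQRepresentative, not_and] at herase
    have hsub : ℬ.erase B ⊆ 𝒜 := (Finset.erase_subset _ _).trans hℬA
    push_neg at herase
    obtain ⟨Y, hYq, hYiff⟩ := herase hsub
    have hfwd : (∃ A ∈ 𝒜, A ∩ Y = ∅) ∧ ∀ B' ∈ ℬ.erase B, B' ∩ Y ≠ ∅ := by
      rcases hYiff with h | ⟨hnoA, B', hB', hB'Y⟩
      · exact ⟨h.1, fun B' hB' => Finset.nonempty_iff_ne_empty.mp (h.2 B' hB')⟩
      · exact absurd hB'Y (Finset.nonempty_iff_ne_empty.mp (hnoA B' (hsub hB')))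
    obtain ⟨hex, hnone⟩ := hfwd
    obtain ⟨B'', hB''ℬ, hB''Y⟩ := (hℬrep.2 Y hYq).mp hex
    have hBB : B'' = B := by
      by_contra hne
      exact hnone B'' (Finset.mem_erase.mpr ⟨hne, hB''ℬ⟩) hB''Y
    refine ⟨Y, hYq, hBB ▸ hB''Y, ?_⟩
    intro B' hB' hne
    exact hnone B' (Finset.mem_erase.mpr ⟨hne, hB'⟩)
  choose! Xw hX1 hX2 hX3 using hwit
  apply MonienAux.bollobas p q ℬ Xw
  · exact fun B hB => hA B (hℬA hB)
  · exact hX1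
  · intro B hB
    rw [Finset.disjoint_iff_inter_eq_empty]
    exact hX2 B hB
  · intro B hB B' hB' hne
    rw [Finset.not_disjoint_iff_nonempty_inter]
    exact Finset.nonempty_iff_ne_empty.mpr (hX3 B hB B' hB' (Ne.symm hne))
end

section
/- Let G be a simple graph on n vertices and let v be a vertex of G. If the number of neighbors u of v satisfying deg(u) > √(2n) (as real numbers) is itself strictly greater than √(2n), then G contains a cycle of length 4. -/
open scoped Classical

/-!
Let `S` be the set of neighbours of `v` of degree greater than `r = √(2n)`. If two vertices
`u₁ ≠ u₂` of `S` have a common neighbour `w ≠ v`, then `v u₁ w u₂` is a 4-cycle. Otherwise the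
sets `N(u) \ {v}`, `u ∈ S`, are pairwise disjoint subsets of `V \ {v}`, so
`∑_{u ∈ S} (deg u - 1) ≤ n - 1`; but with `m = ⌊r⌋ + 1 > r` the left side is at least
`m (m - 1) ≥ n` because `m² > 2n`.
-/

open Finset

namespace SimpleGraph

variable {V : Type*} (G : SimpleGraph V)

theorem hasCycleOfLength_four_of_adj_s8 {a b c d : V} (hab : G.Adj a b) (hbc : G.Adj b c)
    (hcd : G.Adj c d) (hda : G.Adj d a) (hac : a ≠ c) (hbd : b ≠ d) :
    G.HasCycleOfLength 4 := by
  refine ⟨![a, b, c, d], ?_, ?_⟩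
  · have := hab.ne; have := hbc.ne; have := hcd.ne; have := hda.ne
    intro i j hij
    fin_cases i <;> fin_cases j <;> first | rfl | simp_all [eq_comm]
  · intro i
    fin_cases i
    exacts [hab, hbc, hcd, hda]

variable [Fintype V] [DecidableRel G.Adj]

theorem sum_degree_add_one_le_of_pairwiseDisjoint {v : V} {S : Finset V}
    (hS : S ⊆ G.neighborFinset v)
    (hdisj : (S : Set V).PairwiseDisjoint fun u => (G.neighborFinset u).erase v) :
    ∑ u ∈ S, G.degree u + 1 ≤ Fintype.card V + #S := by
  have hv : ∀ u ∈ S, v ∈ G.neighborFinset u := fun u hu =>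
    (G.mem_neighborFinset u v).2 ((G.mem_neighborFinset v u).1 (hS hu)).symm
  have hdegree : ∀ u ∈ S, G.degree u = #((G.neighborFinset u).erase v) + 1 := fun u hu => by
    rw [card_erase_add_one (hv u hu), card_neighborFinset_eq_degree]
  have hunion : #(S.biUnion fun u => (G.neighborFinset u).erase v) + 1 ≤ Fintype.card V :=
    calc #(S.biUnion fun u => (G.neighborFinset u).erase v) + 1
        ≤ #(univ.erase v) + 1 := by
          gcongr
          intro x hx
          obtain ⟨u, -, hxu⟩ := mem_biUnion.1 hx
          exact mem_erase.2 ⟨(mem_erase.1 hxu).1, mem_univ x⟩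
      _ = Fintype.card V := card_erase_add_one (mem_univ v)
  rw [sum_congr rfl hdegree, sum_add_distrib, ← card_biUnion hdisj, sum_const, smul_eq_mul,
    mul_one]
  omega

theorem exists_common_neighbor_of_card_add_card_lt_sum_degree {v : V} {S : Finset V}
    (hS : S ⊆ G.neighborFinset v) (h : Fintype.card V + #S < ∑ u ∈ S, G.degree u + 1) :
    ∃ u₁ ∈ S, ∃ u₂ ∈ S, u₁ ≠ u₂ ∧ ∃ w, w ≠ v ∧ G.Adj u₁ w ∧ G.Adj u₂ w := by
  by_contra! hnone
  refine h.not_ge (G.sum_degree_add_one_le_of_pairwiseDisjoint hS fun u₁ hu₁ u₂ hu₂ hne => ?_)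
  refine Finset.disjoint_left.2 fun w hw₁ hw₂ => ?_
  rw [mem_erase, mem_neighborFinset] at hw₁ hw₂
  exact hnone u₁ hu₁ u₂ hu₂ hne w hw₁.1 hw₁.2 hw₂.2

theorem hasCycleOfLength_four_of_le_card_of_le_degree (v : V) {S : Finset V}
    (hS : S ⊆ G.neighborFinset v) {m : ℕ} (hm : 2 * Fintype.card V < m ^ 2) (hmS : m ≤ #S)
    (hdeg : ∀ u ∈ S, m ≤ G.degree u) : G.HasCycleOfLength 4 := by
  have hsum : #S * m ≤ ∑ u ∈ S, G.degree u := by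
    simpa only [smul_eq_mul] using card_nsmul_le_sum S (G.degree ·) m hdeg
  have hm1 : 1 ≤ m := by nlinarith
  obtain ⟨u₁, hu₁, u₂, hu₂, hne, w, hwv, hu₁w, hu₂w⟩ :=
    G.exists_common_neighbor_of_card_add_card_lt_sum_degree hS (by
      nlinarith [Nat.mul_le_mul_right (m - 1) hmS, Nat.sub_add_cancel hm1])
  have hvu₁ := (G.mem_neighborFinset v u₁).1 (hS hu₁)
  have hvu₂ := (G.mem_neighborFinset v u₂).1 (hS hu₂)
  exact G.hasCycleOfLength_four_of_adj_s8 hvu₁ hu₁w hu₂w.symm hvu₂.symm hwv.symm hne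

end SimpleGraph

/-- If the number of neighbors of `v` of degree greater than `√(2n)` is itself
greater than `√(2n)`, then `G` contains a 4-cycle. -/
theorem four_cycle_of_many_heavy_neighbors {V : Type*} [Fintype V]
    (G : SimpleGraph V) [DecidableRel G.Adj] (v : V)
    (h : Real.sqrt (2 * Fintype.card V) <
      (((G.neighborFinset v).filter fun u =>
        Real.sqrt (2 * Fintype.card V) < (G.degree u : ℝ)).card : ℝ)) :
    G.HasCycleOfLength 4 := by
  set r := Real.sqrt (2 * Fintype.card V)
  have hr : 0 ≤ r := Real.sqrt_nonneg _
  have hm : 2 * Fintype.card V < (⌊r⌋₊ + 1) ^ 2 := by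
    have hlt : r < ⌊r⌋₊ + 1 := Nat.lt_floor_add_one r
    have hsq : r ^ 2 = 2 * Fintype.card V := Real.sq_sqrt (by positivity)
    exact_mod_cast (show (2 * Fintype.card V : ℝ) < (⌊r⌋₊ + 1) ^ 2 by nlinarith)
  refine G.hasCycleOfLength_four_of_le_card_of_le_degree v (filter_subset _ _) hm
    ((Nat.floor_lt hr).2 h) fun u hu => ?_
  exact (Nat.floor_lt hr).2 (mem_filter.1 hu).2
end

section
/- Let G be a finite simple graph and let S be a set of vertices of G. Then there exist disjoint vertex sets X and Y with X ⊆ S such that the number of edges of G having one endpoint in X and the other endpoint in Y is at least (1/6)·Σ_{w∈S} deg(w). -/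
/-!
Average over all `A ⊆ S` the number of edges cut by `(A, Aᶜ)`. Toggling `u ∈ A` flips whether an
edge `uv` is cut, so an edge with an endpoint `u ∈ S` is cut for exactly half of the `A`; as the
degree sum over `S` counts each edge at most twice, the average cut is at least a quarter of it.
-/

open scoped Classical
open Finset

section

variable {V : Type*} [DecidableEq V]

lemma exists_mk_eq_mk_mem_compl_iff [Fintype V] {A : Finset V} {u v : V} :
    (∃ x ∈ A, ∃ y ∈ Aᶜ, s(u, v) = s(x, y)) ↔ (u ∈ A ↔ v ∉ A) := by
  constructor
  · rintro ⟨x, hx, y, hy, h⟩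
    rw [mem_compl] at hy
    rcases Sym2.eq_iff.mp h with ⟨rfl, rfl⟩ | ⟨rfl, rfl⟩ <;> tauto
  · intro h
    by_cases hu : u ∈ A
    · exact ⟨u, hu, v, mem_compl.mpr (h.mp hu), rfl⟩
    · exact ⟨v, not_not.mp (mt h.mpr hu), u, mem_compl.mpr hu, Sym2.eq_swap⟩

lemma two_mul_card_filter_powerset_mem_iff_notMem {S : Finset V} {u v : V} (hu : u ∈ S)
    (huv : u ≠ v) : 2 * #{A ∈ S.powerset | u ∈ A ↔ v ∉ A} = 2 ^ #S := by
  have hpair : ∀ B ∈ (S.erase u).powerset,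
      ((if u ∈ B ↔ v ∉ B then 1 else 0) +
        if u ∈ insert u B ↔ v ∉ insert u B then 1 else 0) = 1 := by
    intro B hB
    have huB : u ∉ B := fun h => notMem_erase u S (mem_powerset.mp hB h)
    by_cases hv : v ∈ B <;> simp [huB, hv, huv.symm]
  rw [← insert_erase hu, card_filter, sum_powerset_insert (notMem_erase u S), ← sum_add_distrib,
    sum_congr rfl hpair, card_insert_of_notMem (notMem_erase u S)]
  simp [pow_succ, mul_comm]

lemma card_filter_mem_le_two (S : Finset V) (u v : V) : #{w ∈ S | w ∈ s(u, v)} ≤ 2 :=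
  calc #{w ∈ S | w ∈ s(u, v)} ≤ #{u, v} :=
        card_le_card fun w hw => by simpa using (mem_filter.mp hw).2
    _ ≤ 2 := card_le_two

lemma card_filter_mem_mul_two_pow_le [Fintype V] (S : Finset V) {e : Sym2 V} (he : ¬e.IsDiag) :
    #{w ∈ S | w ∈ e} * 2 ^ #S ≤ 4 * #{A ∈ S.powerset | ∃ x ∈ A, ∃ y ∈ Aᶜ, e = s(x, y)} := by
  by_cases htouch : ∃ w ∈ S, w ∈ e
  · obtain ⟨u, hu, hue⟩ := htouch
    obtain ⟨v, rfl⟩ := Sym2.mem_iff_exists.mp hue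
    have hcount := two_mul_card_filter_powerset_mem_iff_notMem hu (Sym2.mk_isDiag_iff.not.mp he)
    simp only [exists_mk_eq_mk_mem_compl_iff]
    calc #{w ∈ S | w ∈ s(u, v)} * 2 ^ #S ≤ 2 * 2 ^ #S :=
          Nat.mul_le_mul_right _ (card_filter_mem_le_two S u v)
      _ = 4 * #{A ∈ S.powerset | u ∈ A ↔ v ∉ A} := by omega
  · simp [filter_eq_empty_iff.mpr fun w hw hwe => htouch ⟨w, hw, hwe⟩]

end

namespace SimpleGraph

variable {V : Type*} [Fintype V] [DecidableEq V] (G : SimpleGraph V) [DecidableRel G.Adj]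

def edgesBetween (X Y : Finset V) : Finset (Sym2 V) :=
  G.edgeFinset.filter fun e => ∃ x ∈ X, ∃ y ∈ Y, e = s(x, y)

lemma sum_degree_eq_sum_card_filter_mem (S : Finset V) :
    ∑ w ∈ S, G.degree w = ∑ e ∈ G.edgeFinset, #{w ∈ S | w ∈ e} := by
  simp_rw [← card_incidenceFinset_eq_degree, incidenceFinset_eq_filter]
  exact sum_card_bipartiteAbove_eq_sum_card_bipartiteBelow _

lemma sum_card_edgesBetween_compl_eq (S : Finset V) :
    ∑ A ∈ S.powerset, #(G.edgesBetween A Aᶜ) =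
      ∑ e ∈ G.edgeFinset, #{A ∈ S.powerset | ∃ x ∈ A, ∃ y ∈ Aᶜ, e = s(x, y)} :=
  sum_card_bipartiteAbove_eq_sum_card_bipartiteBelow _

lemma exists_subset_sum_degree_le_four_mul_card_edgesBetween (S : Finset V) :
    ∃ A ⊆ S, ∑ w ∈ S, G.degree w ≤ 4 * #(G.edgesBetween A Aᶜ) := by
  have hsum : ∑ _A ∈ S.powerset, ∑ w ∈ S, G.degree w ≤
      ∑ A ∈ S.powerset, 4 * #(G.edgesBetween A Aᶜ) :=
    calc ∑ _A ∈ S.powerset, ∑ w ∈ S, G.degree w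
        = ∑ e ∈ G.edgeFinset, #{w ∈ S | w ∈ e} * 2 ^ #S := by
          rw [sum_const, card_powerset, smul_eq_mul, mul_comm, sum_degree_eq_sum_card_filter_mem,
            sum_mul]
      _ ≤ ∑ e ∈ G.edgeFinset, 4 * #{A ∈ S.powerset | ∃ x ∈ A, ∃ y ∈ Aᶜ, e = s(x, y)} :=
          sum_le_sum fun e he => card_filter_mem_mul_two_pow_le S
            (G.not_isDiag_of_mem_edgeSet (mem_edgeFinset.mp he))
      _ = ∑ A ∈ S.powerset, 4 * #(G.edgesBetween A Aᶜ) := by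
          rw [← mul_sum, ← mul_sum, sum_card_edgesBetween_compl_eq]
  obtain ⟨A, hA, hle⟩ := exists_le_of_sum_le (powerset_nonempty S) hsum
  exact ⟨A, mem_powerset.mp hA, hle⟩

end SimpleGraph

/-- For any set `S` of vertices of a finite simple graph `G`, there are disjoint
vertex sets `X ⊆ S` and `Y` such that the number of edges of `G` joining `X` to
`Y` is at least `(1/6) ⬝ ∑_{w ∈ S} deg(w)`. -/
theorem exists_dense_bipartite_pair {V : Type*} [Fintype V] [DecidableEq V]
    (G : SimpleGraph V) [DecidableRel G.Adj] (S : Finset V) :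
    ∃ X Y : Finset V, X ⊆ S ∧ Disjoint X Y ∧
      ((∑ w ∈ S, G.degree w : ℕ) : ℝ) / 6 ≤
        ((G.edgeFinset.filter fun e => ∃ x ∈ X, ∃ y ∈ Y, e = s(x, y)).card : ℝ) := by
  obtain ⟨A, hAS, hA⟩ := G.exists_subset_sum_degree_le_four_mul_card_edgesBetween S
  refine ⟨A, Aᶜ, hAS, disjoint_compl_right, ?_⟩
  have hA' : ((∑ w ∈ S, G.degree w : ℕ) : ℝ) ≤ 4 * #(G.edgesBetween A Aᶜ) := by
    exact_mod_cast hA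
  unfold SimpleGraph.edgesBetween at hA'
  linarith [(∑ w ∈ S, G.degree w).cast_nonneg (α := ℝ)]
end

section
/- Let k ≥ 1 be an integer and let H be a bipartite simple graph with parts X and Y in which every vertex has degree at least k. Let i be an integer with 0 ≤ i ≤ k−1, let S be a set of at most i vertices of H, and let x ∈ X with x ∉ S. Then H contains a simple path of length exactly 2(k−i)−1 that starts at x, ends at a vertex of Y, and avoids S entirely (no vertex of the path belongs to S). -/
/-!
Grow the path greedily, two vertices at a time. A path of length `2n + 1` from `x ∈ X` alternates
between the sides, so it has exactly `n + 1` vertices on each side. All neighbours of the current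
end lie on the opposite side, so at most `|S| + n + 1 ≤ i + n + 1` of them are forbidden (in `S` or
already on the path); as long as `n + 1 < k - i`, this is fewer than `k` and a fresh neighbour exists.
-/

namespace SimpleGraph

variable {V : Type*} {G : SimpleGraph V} {s t : Set V} {u v x : V}

theorem IsBipartiteWith.countP_support [DecidablePred (· ∈ s)] [DecidablePred (· ∈ t)]
    (h : G.IsBipartiteWith s t) (p : G.Walk u v) (hu : u ∈ s) :
    p.support.countP (· ∈ s) = p.length / 2 + 1 ∧
      p.support.countP (· ∈ t) = (p.length + 1) / 2 := by
  induction p generalizing s t with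
  | nil => simp [hu, Set.disjoint_left.mp h.disjoint hu]
  | cons hadj q ih =>
    obtain ⟨hq_t, hq_s⟩ := ih h.symm (h.mem_of_mem_adj hu hadj)
    simp only [Walk.support_cons, List.countP_cons, Walk.length_cons, hq_s, hq_t, hu,
      Set.disjoint_left.mp h.disjoint hu, decide_true, decide_false, ↓reduceIte,
      Bool.false_eq_true, true_and]
    omega

theorem Walk.IsPath.exists_concat_isPath_notMem [Fintype (G.neighborSet v)] {p : G.Walk u v}
    (hp : p.IsPath) (F : Finset V) (hF : F.card < G.degree v)
    (hsupp : ∀ w ∈ p.support, G.Adj v w → w ∈ F) :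
    ∃ w, ∃ hvw : G.Adj v w, (p.concat hvw).IsPath ∧ w ∉ F := by
  rw [← card_neighborFinset_eq_degree] at hF
  obtain ⟨w, hw, hwF⟩ := Finset.exists_mem_notMem_of_card_lt_card hF
  have hvw : G.Adj v w := (mem_neighborFinset G v w).mp hw
  exact ⟨w, hvw, hp.concat (fun hwp => hwF (hsupp w hwp hvw)) hvw, hwF⟩

theorem IsBipartiteWith.exists_concat_isPath_avoiding [DecidableEq V] [DecidablePred (· ∈ t)]
    [Fintype (G.neighborSet v)] (h : G.IsBipartiteWith s t) {p : G.Walk u v} (hp : p.IsPath)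
    (hv : v ∈ s) (S : Finset V) (hpS : ∀ z ∈ S, z ∉ p.support)
    (hdeg : S.card + p.support.countP (· ∈ t) < G.degree v) :
    ∃ w ∈ t, ∃ hvw : G.Adj v w, (p.concat hvw).IsPath ∧ ∀ z ∈ S, z ∉ (p.concat hvw).support := by
  set F := S ∪ (p.support.filter (· ∈ t)).toFinset
  have hF : F.card < G.degree v :=
    calc F.card ≤ S.card + (p.support.filter (· ∈ t)).toFinset.card := Finset.card_union_le _ _
      _ ≤ S.card + p.support.countP (· ∈ t) := by
        rw [List.countP_eq_length_filter]
        exact Nat.add_le_add_left (List.toFinset_card_le _) _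
      _ < G.degree v := hdeg
  have hsupp (w : V) (hwp : w ∈ p.support) (hvw : G.Adj v w) : w ∈ F := by
    simp [F, hwp, h.mem_of_mem_adj hv hvw]
  obtain ⟨w, hvw, hpw, hw⟩ := hp.exists_concat_isPath_notMem F hF hsupp
  refine ⟨w, h.mem_of_mem_adj hv hvw, hvw, hpw, fun z hz => ?_⟩
  rw [Walk.support_concat, List.mem_append, List.mem_singleton, not_or]
  exact ⟨hpS z hz, fun hzw => hw (Finset.mem_union_left _ (hzw ▸ hz))⟩

theorem IsBipartiteWith.exists_isPath_avoiding [DecidableEq V] [DecidablePred (· ∈ s)]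
    [DecidablePred (· ∈ t)] [∀ v, Fintype (G.neighborSet v)] (h : G.IsBipartiteWith s t)
    (S : Finset V) (hx : x ∈ s) (hxS : x ∉ S) (n : ℕ) (hdeg : ∀ v, S.card + n < G.degree v) :
    ∃ y ∈ t, ∃ p : G.Walk x y, p.IsPath ∧ p.length = 2 * n + 1 ∧ ∀ z ∈ S, z ∉ p.support := by
  induction n with
  | zero =>
    obtain ⟨y, hy, hxy, hp, hpS⟩ := h.exists_concat_isPath_avoiding Walk.IsPath.nil hx S
      (fun z hz hzx => hxS (List.mem_singleton.mp hzx ▸ hz))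
      (by simpa [Set.disjoint_left.mp h.disjoint hx] using hdeg x)
    exact ⟨y, hy, _, hp, rfl, hpS⟩
  | succ n ih =>
    obtain ⟨y, hy, p, hp, hlen, hpS⟩ := ih fun v => by have := hdeg v; omega
    have hp_s := (h.countP_support p hx).1
    obtain ⟨x', hx', hyx', hp₁, hp₁S⟩ :=
      h.symm.exists_concat_isPath_avoiding hp hy S hpS (by have := hdeg y; omega)
    have hp₁_t := (h.countP_support (p.concat hyx') hx).2
    rw [Walk.length_concat] at hp₁_t
    obtain ⟨y', hy', hx'y', hp₂, hp₂S⟩ :=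
      h.exists_concat_isPath_avoiding hp₁ hx' S hp₁S (by have := hdeg x'; omega)
    exact ⟨y', hy', _, hp₂, by simp only [Walk.length_concat]; omega, hp₂S⟩

end SimpleGraph

theorem exists_long_path_avoiding_general {V : Type*} [Fintype V] [DecidableEq V]
    (H : SimpleGraph V) [DecidableRel H.Adj]
    (X Y : Finset V) (hdisj : Disjoint X Y)
    (hbip : ∀ a b : V, H.Adj a b → (a ∈ X ∧ b ∈ Y) ∨ (a ∈ Y ∧ b ∈ X))
    (k : ℕ) (hk : 1 ≤ k) (hdeg : ∀ v : V, k ≤ H.degree v)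
    (i : ℕ) (hi : i ≤ k - 1) (S : Finset V) (hS : S.card ≤ i)
    (x : V) (hx : x ∈ X) (hxS : x ∉ S) :
    ∃ y ∈ Y, ∃ p : H.Walk x y, p.IsPath ∧ p.length = 2 * (k - i) - 1 ∧
      ∀ s ∈ S, s ∉ p.support := by
  have hH : H.IsBipartiteWith X Y := ⟨Finset.disjoint_coe.mpr hdisj, hbip⟩
  obtain ⟨y, hy, p, hp, hlen, hpS⟩ :=
    hH.exists_isPath_avoiding S hx hxS (k - i - 1) fun v => by have := hdeg v; omega
  exact ⟨y, hy, p, hp, by omega, hpS⟩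

/-- In a bipartite graph `H` with parts `X` and `Y` in which every vertex has
degree at least `k`, for any `0 ≤ i ≤ k - 1`, any set `S` of at most `i`
vertices, and any `x ∈ X \ S`, there is a simple path of length exactly
`2(k - i) - 1` starting at `x`, ending in `Y`, and avoiding `S`. -/
theorem exists_long_path_avoiding {V : Type*} [Fintype V] [DecidableEq V]
    (H : SimpleGraph V) [DecidableRel H.Adj]
    (X Y : Finset V) (hcover : ∀ v : V, v ∈ X ∨ v ∈ Y) (hdisj : Disjoint X Y)
    (hbip : ∀ a b : V, H.Adj a b → (a ∈ X ∧ b ∈ Y) ∨ (a ∈ Y ∧ b ∈ X))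
    (k : ℕ) (hk : 1 ≤ k) (hdeg : ∀ v : V, k ≤ H.degree v)
    (i : ℕ) (hi : i ≤ k - 1) (S : Finset V) (hS : S.card ≤ i)
    (x : V) (hx : x ∈ X) (hxS : x ∉ S) :
    ∃ y ∈ Y, ∃ p : H.Walk x y, p.IsPath ∧ p.length = 2 * (k - i) - 1 ∧
      ∀ s ∈ S, s ∉ p.support :=
  exists_long_path_avoiding_general H X Y hdisj hbip k hk hdeg i hi S hS x hx hxS
end
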